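/- The function r̃(z) = −Log(2 + (2z−1)/w(z)) is complex-differentiable on the open set ℂ∖[0,1]. -/

import Mathlib

/-!
Off `[0,1]` the number `u = (z - 1)/z` avoids `(-∞, 0]`, so `s = u^{1/2}` is holomorphic in `z`
and has positive real part. Since `s² = u` gives `(2z - 1)/(z s) = s + s⁻¹`, the argument of the
logarithm is `2 + s + s⁻¹`, whose real part is positive as well; hence `Log` is holomorphic there.
-/

open Complex Metric

noncomputable def wfun (z : ℂ) : ℂ := z * ((z - 1) / z) ^ ((1 : ℂ)/2)

noncomputable def rTilde (z : ℂ) : ℂ := -Complex.log (2 + (2 * z - 1) / wfun z)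

lemma two_mul_sub_one_div_mul_eq_add_inv {K : Type*} [Field K] {z s : K} (hz : z ≠ 0)
    (hs : s ≠ 0) (hsq : s ^ 2 = (z - 1) / z) : (2 * z - 1) / (z * s) = s + s⁻¹ := by
  rw [eq_div_iff hz] at hsq
  field_simp
  linear_combination -hsq

namespace Complex

lemma re_cpow_one_half_pos {u : ℂ} (hu : u ∈ slitPlane) : 0 < (u ^ (1 / 2 : ℂ)).re := by
  rw [cpow_def_of_ne_zero (slitPlane_ne_zero hu), exp_re]
  have him : (log u * (1 / 2)).im = arg u / 2 := by simp [log_im, div_eq_mul_inv]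
  refine mul_pos (Real.exp_pos _) (Real.cos_pos_of_mem_Ioo ⟨?_, ?_⟩) <;> rw [him]
  · linarith [neg_pi_lt_arg u]
  · linarith [lt_of_le_of_ne (arg_le_pi u) (slitPlane_arg_ne_pi hu)]

lemma re_two_add_add_inv_pos {s : ℂ} (hs : 0 < s.re) : 0 < (2 + s + s⁻¹).re := by
  have hinv : 0 < (s⁻¹).re := by
    rw [inv_re]
    exact div_pos hs (normSq_pos.2 (by rintro rfl; simp at hs))
  simp only [add_re, re_ofNat]
  linarith

lemma ne_zero_of_notMem_ofReal_Icc {z : ℂ} (hz : z ∉ ofReal '' Set.Icc 0 1) : z ≠ 0 :=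
  fun h => hz ⟨0, by simp, by simp [h]⟩

lemma sub_one_div_mem_slitPlane {z : ℂ} (hz : z ∉ ofReal '' Set.Icc 0 1) :
    (z - 1) / z ∈ slitPlane := by
  rw [mem_slitPlane_iff_not_le_zero]
  intro hle
  obtain ⟨hre, him⟩ := nonpos_iff.1 hle
  set t := ((z - 1) / z).re
  have hteq : (z - 1) / z = t := ext rfl (by simpa using him)
  apply hz
  refine ⟨(1 - t)⁻¹, ⟨(inv_pos.2 (by linarith)).le, inv_le_one_of_one_le₀ (by linarith)⟩, ?_⟩
  rw [div_eq_iff (ne_zero_of_notMem_ofReal_Icc hz)] at hteq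
  have h1t : (1 - (t : ℂ)) ≠ 0 := by exact_mod_cast (show (1 : ℝ) - t ≠ 0 by linarith)
  push_cast
  field_simp
  linear_combination -hteq

end Complex

section wfun

variable {z : ℂ}

lemma cpow_one_half_sub_one_div_ne_zero (hz : z ∉ ofReal '' Set.Icc 0 1) :
    ((z - 1) / z) ^ (1 / 2 : ℂ) ≠ 0 :=
  (cpow_ne_zero_iff_of_exponent_ne_zero (by norm_num)).2
    (slitPlane_ne_zero (sub_one_div_mem_slitPlane hz))

lemma wfun_ne_zero (hz : z ∉ ofReal '' Set.Icc 0 1) : wfun z ≠ 0 :=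
  mul_ne_zero (ne_zero_of_notMem_ofReal_Icc hz) (cpow_one_half_sub_one_div_ne_zero hz)

lemma differentiableAt_wfun (hz : z ∉ ofReal '' Set.Icc 0 1) : DifferentiableAt ℂ wfun z :=
  differentiableAt_id.mul <|
    ((differentiableAt_id.sub_const 1).div differentiableAt_id
      (ne_zero_of_notMem_ofReal_Icc hz)).cpow_const (sub_one_div_mem_slitPlane hz)

lemma two_add_div_wfun_mem_slitPlane (hz : z ∉ ofReal '' Set.Icc 0 1) :
    2 + (2 * z - 1) / wfun z ∈ slitPlane := by
  rw [wfun, two_mul_sub_one_div_mul_eq_add_inv (ne_zero_of_notMem_ofReal_Icc hz)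
    (cpow_one_half_sub_one_div_ne_zero hz) (by simp), ← add_assoc]
  exact mem_slitPlane_iff.2 <| .inl <| re_two_add_add_inv_pos <|
    re_cpow_one_half_pos (sub_one_div_mem_slitPlane hz)

end wfun

/-- `r̃` is complex-differentiable on `ℂ∖[0,1]`. -/
theorem stmt_9 :
    DifferentiableOn ℂ rTilde (Complex.ofReal '' Set.Icc (0:ℝ) 1)ᶜ := by
  intro z hz
  have hquot : DifferentiableAt ℂ (fun w => 2 + (2 * w - 1) / wfun w) z :=
    (((differentiableAt_id.const_mul 2).sub_const 1).div (differentiableAt_wfun hz)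
      (wfun_ne_zero hz)).const_add 2
  exact (hquot.clog (two_add_div_wfun_mem_slitPlane hz)).neg.differentiableWithinAt
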